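/- arXiv:1801.00070 — 3 statements merged into one kernel-verified Lean document; each statement's English description precedes it below -/
import Mathlib

section
/- The Motzkin polynomial M(x₁,x₂) = x₁⁴x₂² + x₁²x₂⁴ − 3x₁²x₂² + 1 is not a sum of squares of polynomials. -/
open MvPolynomial

/-- A polynomial is a sum of squares if it is a finite sum of squares of polynomials. -/
def IsSOS {n : ℕ} (p : MvPolynomial (Fin n) ℝ) : Prop :=
  ∃ (m : ℕ) (q : Fin m → MvPolynomial (Fin n) ℝ), p = ∑ i, (q i) ^ 2

/-!
Restrict a putative decomposition `M = ∑ qᵢ²` to lines through the origin. On both axes `M = 1`,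
so every `qᵢ` is constant there and has no linear terms; hence `Aᵢ(t) = qᵢ(t, t)` has no linear
term either. On the diagonal `M(t, t) = (t² - 1)² (2t² + 1)`, so every `Aᵢ` vanishes at `±1`:
`Aᵢ = (t² - 1) uᵢ` with `∑ uᵢ² = 2t² + 1`. Then each `uᵢ` has degree at most one, and its linear
coefficient is minus that of `Aᵢ`, i.e. zero; so `∑ uᵢ²` is constant, a contradiction.
-/

namespace Polynomial

section OrderedRing

variable {ι R : Type*} [CommRing R] [LinearOrder R] [IsStrictOrderedRing R]

theorem two_mul_natDegree_le_natDegree_sum_sq {s : Finset ι} {p : ι → R[X]} {i : ι}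
    (hi : i ∈ s) : 2 * (p i).natDegree ≤ (∑ j ∈ s, p j ^ 2).natDegree := by
  obtain ⟨j, hj, hmax⟩ := s.exists_max_image (fun j => (p j).natDegree) ⟨i, hi⟩
  set d := (p j).natDegree
  calc 2 * (p i).natDegree ≤ 2 * d := Nat.mul_le_mul_left 2 (hmax i hi)
    _ ≤ (∑ j ∈ s, p j ^ 2).natDegree := by
      rcases eq_or_ne (p j) 0 with hpj | hpj
      · simp [d, hpj]
      have hcoeff : (∑ k ∈ s, p k ^ 2).coeff (2 * d) = ∑ k ∈ s, (p k).coeff d ^ 2 := by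
        rw [finsetSum_coeff]
        exact Finset.sum_congr rfl fun k hk => coeff_pow_of_natDegree_le (hmax k hk)
      have hpos : 0 < ∑ k ∈ s, (p k).coeff d ^ 2 :=
        (pow_two_pos_of_ne_zero (leadingCoeff_ne_zero.2 hpj)).trans_le
          (Finset.single_le_sum (fun k _ => sq_nonneg ((p k).coeff d)) hj)
      exact le_natDegree_of_ne_zero (hcoeff ▸ hpos.ne')

theorem eval_eq_zero_of_eval_sum_sq_eq_zero {s : Finset ι} {p : ι → R[X]} {t : R}
    (h : (∑ j ∈ s, p j ^ 2).eval t = 0) {i : ι} (hi : i ∈ s) : (p i).eval t = 0 := by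
  simp only [eval_finsetSum, eval_pow] at h
  exact pow_eq_zero_iff two_ne_zero |>.1 <|
    (Finset.sum_eq_zero_iff_of_nonneg fun _ _ => sq_nonneg _).1 h i hi

end OrderedRing

section OrderedField

variable {ι R : Type*} [Field R] [LinearOrder R] [IsStrictOrderedRing R]

theorem X_sq_sub_one_dvd {p : R[X]} (h₁ : p.eval 1 = 0) (h₂ : p.eval (-1) = 0) :
    X ^ 2 - 1 ∣ p := by
  have hcop : IsCoprime (X - C 1 : R[X]) (X - C (-1)) :=
    isCoprime_X_sub_C_of_isUnit_sub (by norm_num)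
  have := hcop.mul_dvd (dvd_iff_isRoot.2 h₁) (dvd_iff_isRoot.2 h₂)
  convert this using 1
  simp only [map_one, map_neg]
  ring

theorem exists_coeff_one_ne_zero_of_sum_sq_eq {s : Finset ι} {A : ι → R[X]}
    (h : ∑ i ∈ s, A i ^ 2 = (X ^ 2 - 1) ^ 2 * (2 * X ^ 2 + 1)) :
    ∃ i ∈ s, (A i).coeff 1 ≠ 0 := by
  by_contra! hA
  have hroot (t : R) (ht : t ^ 2 = 1) (i : ι) (hi : i ∈ s) : (A i).eval t = 0 :=
    eval_eq_zero_of_eval_sum_sq_eq_zero (by simp [h, ht]) hi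
  choose! u hu using fun i hi =>
    X_sq_sub_one_dvd (hroot 1 (one_pow 2) i hi) (hroot (-1) (by norm_num) i hi)
  have hu_sum : ∑ i ∈ s, u i ^ 2 = 2 * X ^ 2 + 1 := by
    have hX : (X ^ 2 - 1 : R[X]) ≠ 0 := by
      simpa using (monic_X_pow_sub_C (1 : R) two_ne_zero).ne_zero
    refine mul_left_cancel₀ (pow_ne_zero 2 hX) ?_
    rw [← h, Finset.mul_sum]
    exact Finset.sum_congr rfl fun i hi => by rw [hu i hi]; ring
  have hu_deg (i : ι) (hi : i ∈ s) : (u i).natDegree ≤ 1 := by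
    have := two_mul_natDegree_le_natDegree_sum_sq (p := u) hi
    rw [hu_sum, show (2 * X ^ 2 + 1 : R[X]).natDegree = 2 by compute_degree!] at this
    omega
  -- the linear coefficient of `(X ^ 2 - 1) * u` is minus that of `u`
  have hu_coeff (i : ι) (hi : i ∈ s) : (u i).coeff 1 = 0 := by
    simpa [hu i hi, sub_mul, coeff_X_pow_mul'] using hA i hi
  have hcoeff_two : (∑ i ∈ s, u i ^ 2).coeff 2 = 0 := by
    rw [finsetSum_coeff]
    refine Finset.sum_eq_zero fun i hi => ?_
    simpa [hu_coeff i hi] using coeff_pow_of_natDegree_le (m := 2) (hu_deg i hi)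
  rw [hu_sum] at hcoeff_two
  norm_num [coeff_one] at hcoeff_two

end OrderedField

end Polynomial

namespace MvPolynomial

variable {σ R : Type*} [CommSemiring R]

noncomputable def restrictLine (a : σ → R) : MvPolynomial σ R →ₐ[R] Polynomial R :=
  aeval fun i => Polynomial.C (a i) * Polynomial.X

theorem restrictLine_monomial (a : σ → R) (d : σ →₀ ℕ) (c : R) :
    restrictLine a (monomial d c) =
      Polynomial.C (c * d.prod fun i k => a i ^ k) * Polynomial.X ^ d.sum fun _ k => k := by
  simp only [restrictLine, aeval_monomial, Finsupp.prod, Finsupp.sum, mul_pow,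
    Finset.prod_mul_distrib, Finset.prod_pow_eq_pow_sum, map_mul, map_prod, map_pow,
    Polynomial.algebraMap_eq, mul_assoc]

theorem coeff_one_restrictLine [Fintype σ] (a : σ → R) (q : MvPolynomial σ R) :
    (restrictLine a q).coeff 1 = ∑ i, a i * q.coeff (Finsupp.single i 1) := by
  classical
  induction q using MvPolynomial.induction_on' with
  | add p q hp hq =>
    simp only [map_add, Polynomial.coeff_add, hp, hq, coeff_add, mul_add, Finset.sum_add_distrib]
  | monomial d c =>
    rw [restrictLine_monomial, Polynomial.coeff_C_mul_X_pow]
    by_cases hd : d.sum (fun _ k => k) = 1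
    · obtain ⟨j, rfl⟩ := (Finsupp.sum_eq_one_iff d).1 hd
      rw [if_pos hd.symm, Finsupp.prod_single_index (h := fun i k => a i ^ k) (pow_zero _),
        pow_one, mul_comm]
      simp only [coeff_monomial, Finsupp.single_left_inj one_ne_zero, mul_ite, mul_zero,
        Finset.sum_ite_eq, Finset.mem_univ, if_true]
    · rw [if_neg (Ne.symm hd)]
      refine (Finset.sum_eq_zero fun i _ => ?_).symm
      rw [coeff_monomial, if_neg, mul_zero]
      rintro rfl
      simp at hd

end MvPolynomial

noncomputable def motzkin : MvPolynomial (Fin 2) ℝ :=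
  X 0 ^ 4 * X 1 ^ 2 + X 0 ^ 2 * X 1 ^ 4 - 3 * X 0 ^ 2 * X 1 ^ 2 + 1

theorem restrictLine_single_motzkin (j : Fin 2) : restrictLine (Pi.single j 1) motzkin = 1 := by
  fin_cases j <;> simp [motzkin, restrictLine]

theorem restrictLine_one_motzkin :
    restrictLine 1 motzkin = (Polynomial.X ^ 2 - 1) ^ 2 * (2 * Polynomial.X ^ 2 + 1) := by
  simp only [motzkin, restrictLine, Pi.one_apply, map_one, one_mul, map_add, map_sub, map_mul,
    map_pow, aeval_X, aeval_ofNat]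
  ring

/-- The Motzkin polynomial is not a sum of squares of polynomials. -/
theorem motzkin_not_sos :
    ¬ IsSOS (X 0 ^ 4 * X 1 ^ 2 + X 0 ^ 2 * X 1 ^ 4 - 3 * X 0 ^ 2 * X 1 ^ 2 + 1 :
      MvPolynomial (Fin 2) ℝ) := by
  rintro ⟨m, q, hq⟩
  have hsum (a : Fin 2 → ℝ) : ∑ i, restrictLine a (q i) ^ 2 = restrictLine a motzkin := by
    simp only [motzkin, hq, map_sum, map_pow]
  have hlinear (i : Fin m) (j : Fin 2) : (q i).coeff (Finsupp.single j 1) = 0 := by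
    have hdeg := Polynomial.two_mul_natDegree_le_natDegree_sum_sq
      (p := fun i => restrictLine (Pi.single j 1) (q i)) (Finset.mem_univ i)
    rw [hsum, restrictLine_single_motzkin, Polynomial.natDegree_one] at hdeg
    have := Polynomial.coeff_eq_zero_of_natDegree_lt
      (p := restrictLine (Pi.single j 1) (q i)) (n := 1) (by omega)
    simpa [coeff_one_restrictLine, Pi.single_apply] using this
  obtain ⟨i, -, hi⟩ := Polynomial.exists_coeff_one_ne_zero_of_sum_sq_eq
    ((hsum 1).trans restrictLine_one_motzkin)
  simp [coeff_one_restrictLine, hlinear] at hi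
end

section
/- If a polynomial p in n variables of degree d is a sum of squares, then its top homogeneous component (the sum of its degree-d monomials) is also a sum of squares. -/
open MvPolynomial

/-!
Write `p = ∑ qᵢ²` and let `m` be the largest degree of the `qᵢ`. The degree-`2m` component of
`p` is `∑ (qᵢ)ₘ²`, where `(qᵢ)ₘ` is the degree-`m` component of `qᵢ`. Over an ordered ring a
sum of squares of polynomials vanishes only if every summand does (evaluate at points), and
some `(qᵢ)ₘ` is nonzero, so `p` has degree exactly `2m` and its top component is `∑ (qᵢ)ₘ²`.
-/

namespace MvPolynomial

variable {σ R : Type*}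

section CommSemiring

variable [CommSemiring R]

theorem homogeneousComponent_mul_of_totalDegree_le {p q : MvPolynomial σ R} {a b : ℕ}
    (hp : p.totalDegree ≤ a) (hq : q.totalDegree ≤ b) :
    homogeneousComponent (a + b) (p * q) =
      homogeneousComponent a p * homogeneousComponent b q := by
  classical
  ext d
  rw [coeff_homogeneousComponent]
  split_ifs with hd
  · simp only [coeff_mul, coeff_homogeneousComponent]
    refine Finset.sum_congr rfl fun x hx => ?_
    rw [Finset.HasAntidiagonal.mem_antidiagonal] at hx
    rw [← hx, map_add] at hd
    rcases trichotomy_of_add_eq_add hd.symm with h | h | h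
    · rw [if_pos h.1.symm, if_pos h.2.symm]
    · rw [if_neg h.ne', zero_mul, coeff_eq_zero_of_totalDegree_lt (hp.trans_lt h), zero_mul]
    · rw [if_neg h.ne', mul_zero, coeff_eq_zero_of_totalDegree_lt (hq.trans_lt h), mul_zero]
  · exact ((homogeneousComponent_isHomogeneous a p).mul
      (homogeneousComponent_isHomogeneous b q)).coeff_eq_zero hd |>.symm

theorem homogeneousComponent_totalDegree_ne_zero {p : MvPolynomial σ R} (hp : p ≠ 0) :
    homogeneousComponent p.totalDegree p ≠ 0 := by
  obtain ⟨d, hd, hdeg⟩ := p.support.exists_mem_eq_sup (support_nonempty.mpr hp) Finsupp.degree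
  have htop : d.degree = p.totalDegree := hdeg.symm
  intro h0
  have hcoeff := coeff_homogeneousComponent p.totalDegree p d
  rw [h0, coeff_zero, if_pos htop] at hcoeff
  exact mem_support_iff.mp hd hcoeff.symm

theorem homogeneousComponent_two_mul_sum_sq {ι : Type*} {s : Finset ι}
    {q : ι → MvPolynomial σ R} {m : ℕ} (hq : ∀ i ∈ s, (q i).totalDegree ≤ m) :
    homogeneousComponent (2 * m) (∑ i ∈ s, q i ^ 2) =
      ∑ i ∈ s, homogeneousComponent m (q i) ^ 2 := by
  rw [map_sum]
  refine Finset.sum_congr rfl fun i hi => ?_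
  rw [sq, sq, two_mul, homogeneousComponent_mul_of_totalDegree_le (hq i hi) (hq i hi)]

end CommSemiring

section OrderedRing

variable [CommRing R] [LinearOrder R] [IsStrictOrderedRing R]

theorem sum_sq_eq_zero_iff {ι : Type*} {s : Finset ι} {q : ι → MvPolynomial σ R} :
    ∑ i ∈ s, q i ^ 2 = 0 ↔ ∀ i ∈ s, q i = 0 := by
  refine ⟨fun h i hi => MvPolynomial.funext fun x => ?_,
    fun h => Finset.sum_eq_zero fun i hi => by simp [h i hi]⟩
  have hx := congrArg (eval x) h
  simp only [map_sum, map_pow, map_zero] at hx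
  simpa using (Finset.sum_eq_zero_iff_of_nonneg fun j _ => sq_nonneg (eval x (q j))).mp hx i hi

theorem totalDegree_sum_sq {ι : Type*} (s : Finset ι) (q : ι → MvPolynomial σ R) :
    (∑ i ∈ s, q i ^ 2).totalDegree = 2 * s.sup fun i => (q i).totalDegree := by
  set m := s.sup fun i => (q i).totalDegree
  have hq : ∀ i ∈ s, (q i).totalDegree ≤ m :=
    fun i hi => Finset.le_sup (f := fun i => (q i).totalDegree) hi
  refine le_antisymm (totalDegree_finsetSum_le fun i hi => ?_) ?_
  · exact (totalDegree_pow _ 2).trans (Nat.mul_le_mul_left 2 (hq i hi))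
  rcases s.eq_empty_or_nonempty with rfl | hs
  · simp [m]
  obtain ⟨j, hj, hjm⟩ := s.exists_mem_eq_sup hs fun i => (q i).totalDegree
  by_cases hqj : q j = 0
  · simp [m, hjm, hqj]
  have htop : homogeneousComponent (2 * m) (∑ i ∈ s, q i ^ 2) ≠ 0 := by
    rw [homogeneousComponent_two_mul_sum_sq hq, Ne, sum_sq_eq_zero_iff]
    exact fun h => homogeneousComponent_totalDegree_ne_zero hqj (hjm ▸ h j hj)
  exact not_lt.mp (mt (homogeneousComponent_eq_zero _ _) htop)

end OrderedRing

end MvPolynomial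

/-- If a polynomial of degree `d` is a sum of squares, then its top homogeneous component
(the sum of its degree-`d` monomials) is also a sum of squares. -/
theorem thc_of_sos (n d : ℕ) (p : MvPolynomial (Fin n) ℝ)
    (hd : p.totalDegree = d) (h : IsSOS p) :
    IsSOS (homogeneousComponent d p) := by
  obtain ⟨k, q, rfl⟩ := h
  set m := Finset.univ.sup fun i => (q i).totalDegree
  have hq : ∀ i ∈ Finset.univ, (q i).totalDegree ≤ m :=
    fun i hi => Finset.le_sup (f := fun i => (q i).totalDegree) hi
  rw [← hd, totalDegree_sum_sq, homogeneousComponent_two_mul_sum_sq hq]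
  exact ⟨k, fun i => homogeneousComponent m (q i), rfl⟩
end

section
/- If a polynomial p is radially unbounded, then its top homogeneous component is positive semidefinite (nonnegative everywhere). -/
/-!
Along the ray through `y`, `p (t • y) = ∑ i ≤ d, t ^ i * pᵢ y` with `pᵢ` the homogeneous components
and `d` the total degree, so `p (t • y) / t ^ d → p_d y` as `t → ∞`. For `y ≠ 0` the numerator is
eventually positive by radial unboundedness, hence `p_d y ≥ 0`; by continuity this extends to
`y = 0`, which lies in the closure of the nonzero vectors as soon as `n > 0`.
-/

open MvPolynomial Filter Topology Finset

namespace MvPolynomial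

theorem IsHomogeneous.eval_smul {σ R : Type*} [CommSemiring R] {q : MvPolynomial σ R} {m : ℕ}
    (hq : q.IsHomogeneous m) (t : R) (x : σ → R) :
    eval (t • x) q = t ^ m * eval x q := by
  rw [eval_eq, eval_eq, mul_sum]
  refine sum_congr rfl fun d hd => ?_
  have hdeg : ∑ i ∈ d.support, d i = m := by
    simpa [Finsupp.weight_apply, Finsupp.sum] using hq (mem_support_iff.mp hd)
  simp_rw [Pi.smul_apply, smul_eq_mul, mul_pow, prod_mul_distrib, prod_pow_eq_pow_sum, hdeg]
  ring

theorem eval_smul_eq_sum_homogeneousComponent {σ R : Type*} [CommSemiring R]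
    (p : MvPolynomial σ R) (t : R) (x : σ → R) :
    eval (t • x) p =
      ∑ i ∈ range (p.totalDegree + 1), t ^ i * eval x (homogeneousComponent i p) := by
  conv_lhs => rw [← p.sum_homogeneousComponent]
  simp only [map_sum, (homogeneousComponent_isHomogeneous _ p).eval_smul]

theorem tendsto_pow_totalDegree_mul_eval_inv_smul {σ : Type*} (p : MvPolynomial σ ℝ)
    (x : σ → ℝ) :
    Tendsto (fun s : ℝ => s ^ p.totalDegree * eval (s⁻¹ • x) p) (𝓝[>] 0)
      (𝓝 (eval x (homogeneousComponent p.totalDegree p))) := by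
  set d := p.totalDegree
  -- the reversed one-variable polynomial, whose value at `0` is its top coefficient
  let f : ℝ → ℝ := fun s => ∑ i ∈ range (d + 1), s ^ (d - i) * eval x (homogeneousComponent i p)
  have hf0 : f 0 = eval x (homogeneousComponent d p) := by
    simp only [f]
    rw [sum_eq_single_of_mem d (self_mem_range_succ d)]
    · simp
    · intro i hi hid
      have hlt := mem_range.mp hi
      simp [zero_pow (by omega : d - i ≠ 0)]
  have hfs : ∀ s : ℝ, s ≠ 0 → s ^ d * eval (s⁻¹ • x) p = f s := by
    intro s hs
    rw [eval_smul_eq_sum_homogeneousComponent, mul_sum]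
    refine sum_congr rfl fun i hi => ?_
    have hid : i ≤ d := Nat.lt_succ_iff.mp (mem_range.mp hi)
    rw [pow_sub₀ _ hs hid, inv_pow, mul_assoc]
  have hcont : Continuous f := by fun_prop
  rw [← hf0]
  refine (hcont.tendsto 0).mono_left nhdsWithin_le_nhds |>.congr' ?_
  filter_upwards [self_mem_nhdsWithin] with s hs
  exact (hfs s (ne_of_gt hs)).symm

end MvPolynomial

theorem tendsto_norm_inv_smul_nhdsGT_zero {E : Type*} [NormedAddCommGroup E] [NormedSpace ℝ E]
    {y : E} (hy : y ≠ 0) :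
    Tendsto (fun s : ℝ => ‖s⁻¹ • y‖) (𝓝[>] 0) atTop := by
  simp_rw [norm_smul, Real.norm_eq_abs]
  exact (tendsto_abs_atTop_atTop.comp tendsto_inv_nhdsGT_zero).atTop_mul_const (norm_pos_iff.mpr hy)

theorem MvPolynomial.eval_homogeneousComponent_totalDegree_nonneg_of_ne_zero {σ : Type*}
    [Fintype σ] {p : MvPolynomial σ ℝ}
    (hrad : ∀ M : ℝ, ∃ R : ℝ, ∀ x : σ → ℝ, R < ‖x‖ → M < eval x p) {y : σ → ℝ} (hy : y ≠ 0) :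
    0 ≤ eval y (homogeneousComponent p.totalDegree p) := by
  obtain ⟨R, hR⟩ := hrad 0
  refine ge_of_tendsto (tendsto_pow_totalDegree_mul_eval_inv_smul p y) ?_
  filter_upwards [self_mem_nhdsWithin,
    (tendsto_norm_inv_smul_nhdsGT_zero hy).eventually_gt_atTop R] with s hs hRs
  exact mul_nonneg (pow_nonneg (le_of_lt hs) _) (hR _ hRs).le

/-- If a polynomial `p` on ℝⁿ (n ≥ 1) is radially unbounded, then its top homogeneous
component is positive semidefinite, i.e. nonnegative everywhere. -/
theorem thc_nonneg_of_radially_unbounded (n : ℕ) (hn : 0 < n)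
    (p : MvPolynomial (Fin n) ℝ)
    (hrad : ∀ M : ℝ, ∃ R : ℝ, ∀ x : Fin n → ℝ, R < ‖x‖ → M < eval x p) :
    ∀ x : Fin n → ℝ, 0 ≤ eval x (homogeneousComponent p.totalDegree p) := by
  have : Nonempty (Fin n) := ⟨⟨0, hn⟩⟩
  exact (dense_compl_singleton (0 : Fin n → ℝ)).induction
    (fun y hy => eval_homogeneousComponent_totalDegree_nonneg_of_ne_zero hrad hy)
    (isClosed_le continuous_const (continuous_eval _))
end
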